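/- arXiv:2110.15458 — 3 statements merged into one kernel-verified Lean document; each statement's English description precedes it below -/
import Mathlib

section
/- Let φ : X → ℝ^d, λ > 0, and for n points define V_n = λ²I_d + Σᵢφ(xᵢ)φ(xᵢ)ᵀ and σ_{i−1}²(xᵢ) = λ²φ(xᵢ)ᵀV_{i−1}⁻¹φ(xᵢ). Then Σᵢ₌₁ⁿ log(1 + σ_{i−1}²(xᵢ)/λ²) = log det(V_n/λ²). -/
/-!
Adding the rank-one term `v vᵀ` to a positive definite matrix `V` multiplies its determinant by
`1 + vᵀ V⁻¹ v` (matrix determinant lemma). Starting from `λ² I` and adding the observed features one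
at a time, the logarithms of these factors telescope to `log det V_n - log det (λ² I)`.
-/

open Matrix Finset

namespace Matrix

theorem det_add_vecMulVec {m R : Type*} [Fintype m] [DecidableEq m] [CommRing R]
    {A : Matrix m m R} (hA : IsUnit A.det) (u v : m → R) :
    (A + vecMulVec u v).det = A.det * (1 + v ⬝ᵥ A⁻¹ *ᵥ u) := by
  rw [vecMulVec_eq Unit, det_add_replicateCol_mul_replicateRow hA]
  congr 1
  rw [det_unique, add_apply, one_apply_eq, Matrix.mul_assoc, ← replicateCol_mulVec,
    replicateRow_mul_replicateCol_apply]

variable {ι : Type*} (A : Matrix ι ι ℝ) (v : ℕ → ι → ℝ)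

def rankOneUpdates (k : ℕ) : Matrix ι ι ℝ :=
  A + ∑ j ∈ range k, vecMulVec (v j) (v j)

theorem rankOneUpdates_zero : rankOneUpdates A v 0 = A := by
  simp [rankOneUpdates]

theorem rankOneUpdates_succ (k : ℕ) :
    rankOneUpdates A v (k + 1) = rankOneUpdates A v k + vecMulVec (v k) (v k) := by
  simp only [rankOneUpdates, sum_range_succ, add_assoc]

variable {A} [Fintype ι]

theorem PosDef.rankOneUpdates (hA : A.PosDef) (k : ℕ) : (rankOneUpdates A v k).PosDef := by
  induction k with
  | zero => rwa [rankOneUpdates_zero]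
  | succ k ih =>
    rw [rankOneUpdates_succ]
    simpa using ih.add_posSemidef (posSemidef_vecMulVec_self_star (v k))

theorem sum_log_one_add_eq_log_det_rankOneUpdates [DecidableEq ι] (hA : A.PosDef) (n : ℕ) :
    ∑ i ∈ range n, Real.log (1 + v i ⬝ᵥ (rankOneUpdates A v i)⁻¹ *ᵥ v i) =
      Real.log (rankOneUpdates A v n).det - Real.log A.det := by
  induction n with
  | zero => simp [rankOneUpdates_zero]
  | succ k ih =>
    have hV := hA.rankOneUpdates v k
    have hq : 0 < 1 + v k ⬝ᵥ (rankOneUpdates A v k)⁻¹ *ᵥ v k := by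
      have := hV.inv.posSemidef.dotProduct_mulVec_nonneg (v k)
      simp only [star_trivial] at this
      linarith
    rw [sum_range_succ, ih, rankOneUpdates_succ, det_add_vecMulVec hV.det_pos.ne'.isUnit,
      Real.log_mul hV.det_pos.ne' hq.ne']
    ring

end Matrix

theorem elliptical_potential_identity
    {X : Type*} {d : ℕ} (φ : X → (Fin d → ℝ)) (lam : ℝ) (hlam : 0 < lam)
    (x : ℕ → X) (n : ℕ) :
    (∑ i ∈ Finset.range n,
      Real.log (1 + (lam ^ 2 * (φ (x i) ⬝ᵥ
        ((lam ^ 2) • (1 : Matrix (Fin d) (Fin d) ℝ) +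
          ∑ j ∈ Finset.range i, Matrix.vecMulVec (φ (x j)) (φ (x j)))⁻¹ *ᵥ φ (x i))) / lam ^ 2)) =
    Real.log (((lam ^ 2)⁻¹ • ((lam ^ 2) • (1 : Matrix (Fin d) (Fin d) ℝ) +
        ∑ j ∈ Finset.range n, Matrix.vecMulVec (φ (x j)) (φ (x j)))).det) := by
  have hlam2 : 0 < lam ^ 2 := by positivity
  have hA : (lam ^ 2 • (1 : Matrix (Fin d) (Fin d) ℝ)).PosDef := PosDef.one.smul hlam2
  have hdetV := (hA.rankOneUpdates (φ ∘ x) n).det_pos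
  simp_rw [mul_div_cancel_left₀ _ hlam2.ne']
  have key := sum_log_one_add_eq_log_det_rankOneUpdates (φ ∘ x) hA n
  simp only [rankOneUpdates, Function.comp_apply] at key hdetV
  rw [key, det_smul, det_smul, det_one, mul_one, Real.log_mul (by positivity) hdetV.ne', inv_pow,
    Real.log_inv]
  ring
end

section
/- Offline fixed-design confidence interval (finite-dimensional version): let φ : X → ℝ^d, f(x) = wᵀφ(x) with ‖w‖₂ ≤ B, fixed points x₁,…,x_n, observations yᵢ = f(xᵢ) + εᵢ with independent R-sub-Gaussian εᵢ, λ > 0, V_n = λ²I + Σφ(xᵢ)φ(xᵢ)ᵀ, μ_n(x) = φ(x)ᵀV_n⁻¹Σᵢφ(xᵢ)yᵢ, σ_n²(x) = λ²φ(x)ᵀV_n⁻¹φ(x). Then for each fixed x and δ ∈ (0,1), with probability at least 1 − δ, |f(x) − μ_n(x)| ≤ (B + (R/λ)√(2log(2/δ)))·σ_n(x). -/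
/-!
Write `V = λ²I + Σᵢ φ(xᵢ)φ(xᵢ)ᵀ` and `a = V⁻¹φ(x)`. Since `V a = φ(x)` and `V` is symmetric, the
error splits as `f(x) - μₙ(x) = λ²⟨a, w⟩ - Σᵢ ⟨φ(xᵢ), a⟩ εᵢ`: a deterministic bias minus a fixed
linear combination of the noise. Moreover `σₙ(x)² = λ²⟨φ(x), a⟩ = λ⁴‖a‖² + λ² Σᵢ ⟨φ(xᵢ), a⟩²`,
so Cauchy–Schwarz bounds the bias by `B σₙ(x)`, and the weights `⟨φ(xᵢ), a⟩` have `ℓ²`-norm at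
most `σₙ(x) / λ`. A combination of independent `R`-sub-Gaussian variables with weights `c` is
`R‖c‖`-sub-Gaussian, and its two-sided Chernoff bound at level `δ` is `R‖c‖√(2 log(2/δ))`.
-/

open MeasureTheory Matrix Finset Real ProbabilityTheory
open scoped NNReal

namespace ProbabilityTheory.HasSubgaussianMGF

variable {Ω : Type*} [MeasurableSpace Ω] {μ : Measure Ω} {X : Ω → ℝ} {c : ℝ≥0}

lemma measureReal_abs_ge_le (h : HasSubgaussianMGF X c μ) {u : ℝ} (hu : 0 ≤ u) :
    μ.real {ω | u ≤ |X ω|} ≤ 2 * exp (-u ^ 2 / (2 * c)) := by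
  have hsplit : {ω | u ≤ |X ω|} = {ω | u ≤ X ω} ∪ {ω | u ≤ (-X) ω} := by
    ext ω; simp [le_abs]
  calc μ.real {ω | u ≤ |X ω|} ≤ μ.real {ω | u ≤ X ω} + μ.real {ω | u ≤ (-X) ω} := by
        rw [hsplit]; exact measureReal_union_le _ _
    _ ≤ exp (-u ^ 2 / (2 * c)) + exp (-u ^ 2 / (2 * c)) :=
        add_le_add (h.measure_ge_le hu) (h.neg.measure_ge_le hu)
    _ = 2 * exp (-u ^ 2 / (2 * c)) := by ring

lemma ofReal_one_sub_le_measure_abs_le [IsProbabilityMeasure μ] (h : HasSubgaussianMGF X c μ)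
    {δ : ℝ} (hδ : 0 < δ) :
    ENNReal.ofReal (1 - δ) ≤ μ {ω | |X ω| ≤ √(2 * c * log (2 / δ))} := by
  rcases le_or_gt 1 δ with hδ1 | hδ1
  · simp [ENNReal.ofReal_of_nonpos (sub_nonpos.2 hδ1)]
  set u := √(2 * c * log (2 / δ))
  suffices hcompl : μ {ω | |X ω| ≤ u}ᶜ ≤ ENNReal.ofReal δ by
    calc ENNReal.ofReal (1 - δ) = 1 - ENNReal.ofReal δ := by
          rw [ENNReal.ofReal_sub _ hδ.le, ENNReal.ofReal_one]
      _ ≤ 1 - μ {ω | |X ω| ≤ u}ᶜ := tsub_le_tsub_left hcompl 1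
      _ ≤ μ {ω | |X ω| ≤ u} := by
          simpa using measure_univ_le_add_compl {ω | |X ω| ≤ u} (μ := μ)
  -- For `c = 0` the Chernoff bound is void (`x / 0 = 0`), but then `X = 0` almost surely.
  rcases eq_or_ne c 0 with rfl | hc
  · have hX0 : μ {ω | ¬X ω = 0} = 0 := ae_iff.1 h.ae_eq_zero_of_hasSubgaussianMGF_zero
    have hnull : μ {ω | |X ω| ≤ u}ᶜ = 0 := by
      refine measure_mono_null (fun ω hω => ?_) hX0
      simpa [u] using hω
    simp [hnull]
  · have hlog : 0 < log (2 / δ) := log_pos (by rw [lt_div_iff₀ hδ]; linarith)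
    have htail : 2 * exp (-u ^ 2 / (2 * c)) = δ := by
      rw [sq_sqrt (by positivity), show -(2 * c * log (2 / δ)) / (2 * c) = -log (2 / δ) by
        field_simp, Real.exp_neg, exp_log (by positivity)]
      field_simp
    calc μ {ω | |X ω| ≤ u}ᶜ ≤ μ {ω | u ≤ |X ω|} :=
          measure_mono fun ω (hω : ¬ _) => show u ≤ |X ω| from (not_le.1 hω).le
      _ = ENNReal.ofReal (μ.real {ω | u ≤ |X ω|}) := (ofReal_measureReal).symm
      _ ≤ ENNReal.ofReal δ :=
          ENNReal.ofReal_le_ofReal (htail ▸ h.measureReal_abs_ge_le (sqrt_nonneg _))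

end ProbabilityTheory.HasSubgaussianMGF

lemma ProbabilityTheory.iIndepFun.hasSubgaussianMGF_sum_mul {Ω ι : Type*} [MeasurableSpace Ω]
    {μ : Measure Ω} [Fintype ι] {ε : ι → Ω → ℝ} {c : ℝ≥0} (hindep : iIndepFun ε μ)
    (hε : ∀ i, HasSubgaussianMGF (ε i) c μ) (a : ι → ℝ) :
    HasSubgaussianMGF (fun ω => ∑ i, a i * ε i ω) ((∑ i, ‖a i‖₊ ^ 2) * c) μ := by
  have hcoeff (i : ι) : ‖a i‖₊ ^ 2 = ⟨a i ^ 2, sq_nonneg _⟩ := by ext; simp; rfl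
  simp_rw [Finset.sum_mul, hcoeff]
  exact HasSubgaussianMGF.sum_of_iIndepFun
    (hindep.comp (fun i r => a i * r) fun i => measurable_const_mul (a i))
    fun i _ => (hε i).const_mul (a i)

lemma ProbabilityTheory.iIndepFun.ofReal_one_sub_le_measure_abs_sum_mul_le {Ω ι : Type*}
    [MeasurableSpace Ω] {μ : Measure Ω} [IsProbabilityMeasure μ] [Fintype ι] {ε : ι → Ω → ℝ}
    {R : ℝ} (hindep : iIndepFun ε μ) (hε : ∀ i, HasSubgaussianMGF (ε i) (‖R‖₊ ^ 2) μ)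
    (a : ι → ℝ) {δ : ℝ} (hδ : 0 < δ) :
    ENNReal.ofReal (1 - δ) ≤
      μ {ω | |∑ i, a i * ε i ω| ≤ |R| * √(∑ i, a i ^ 2) * √(2 * log (2 / δ))} := by
  have hradius : √(2 * ↑((∑ i, ‖a i‖₊ ^ 2) * ‖R‖₊ ^ 2) * log (2 / δ)) =
      |R| * √(∑ i, a i ^ 2) * √(2 * log (2 / δ)) := by
    rw [← sqrt_sq_eq_abs, ← sqrt_mul (sq_nonneg _), ← sqrt_mul (by positivity)]
    push_cast
    simp only [norm_eq_abs, sq_abs]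
    congr 1
    ring
  simpa only [hradius] using
    (hindep.hasSubgaussianMGF_sum_mul hε a).ofReal_one_sub_le_measure_abs_le hδ

section RegularizedGram

variable {ι m : Type*} [Fintype ι] [Fintype m] [DecidableEq m] (lam : ℝ) (Φ : ι → m → ℝ)

def regularizedGram : Matrix m m ℝ := lam ^ 2 • 1 + ∑ i, vecMulVec (Φ i) (Φ i)

lemma regularizedGram_mulVec (z : m → ℝ) :
    regularizedGram lam Φ *ᵥ z = lam ^ 2 • z + ∑ i, (Φ i ⬝ᵥ z) • Φ i := by
  simp only [regularizedGram, add_mulVec, smul_mulVec, one_mulVec, sum_mulVec, vecMulVec_mulVec,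
    op_smul_eq_smul]

lemma dotProduct_regularizedGram_mulVec (y z : m → ℝ) :
    y ⬝ᵥ regularizedGram lam Φ *ᵥ z = lam ^ 2 * (y ⬝ᵥ z) + ∑ i, (Φ i ⬝ᵥ y) * (Φ i ⬝ᵥ z) := by
  simp only [regularizedGram_mulVec, dotProduct_add, dotProduct_smul, dotProduct_sum, smul_eq_mul]
  exact congrArg _ (Finset.sum_congr rfl fun i _ => by rw [dotProduct_comm y, mul_comm])

variable {lam}

lemma posDef_regularizedGram (hlam : lam ≠ 0) : (regularizedGram lam Φ).PosDef := by
  refine (PosDef.one.smul (sq_pos_of_ne_zero hlam)).add_posSemidef (posSemidef_sum _ fun i _ => ?_)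
  simpa using posSemidef_vecMulVec_self_star (Φ i)

lemma dotProduct_inv_regularizedGram_mulVec (hlam : lam ≠ 0) (p v : m → ℝ) :
    p ⬝ᵥ (regularizedGram lam Φ)⁻¹ *ᵥ v = (regularizedGram lam Φ)⁻¹ *ᵥ p ⬝ᵥ v := by
  have hsymm : ((regularizedGram lam Φ)⁻¹)ᵀ = (regularizedGram lam Φ)⁻¹ := by
    rw [← conjTranspose_eq_transpose_of_trivial]
    exact (posDef_regularizedGram Φ hlam).inv.isHermitian
  rw [dotProduct_mulVec, ← mulVec_transpose, hsymm]

lemma regularizedGram_mulVec_inv_mulVec (hlam : lam ≠ 0) (p : m → ℝ) :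
    regularizedGram lam Φ *ᵥ (regularizedGram lam Φ)⁻¹ *ᵥ p = p := by
  have hdet := (isUnit_iff_isUnit_det _).1 (posDef_regularizedGram Φ hlam).isUnit
  rw [mulVec_mulVec, mul_nonsing_inv _ hdet, one_mulVec]

lemma dotProduct_inv_regularizedGram_mulVec_self (hlam : lam ≠ 0) (p : m → ℝ) :
    p ⬝ᵥ (regularizedGram lam Φ)⁻¹ *ᵥ p =
      lam ^ 2 * ((regularizedGram lam Φ)⁻¹ *ᵥ p ⬝ᵥ (regularizedGram lam Φ)⁻¹ *ᵥ p) +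
        ∑ i, (Φ i ⬝ᵥ (regularizedGram lam Φ)⁻¹ *ᵥ p) ^ 2 := by
  have h := dotProduct_regularizedGram_mulVec lam Φ ((regularizedGram lam Φ)⁻¹ *ᵥ p)
    ((regularizedGram lam Φ)⁻¹ *ᵥ p)
  simpa only [regularizedGram_mulVec_inv_mulVec Φ hlam, dotProduct_comm _ p, ← sq] using h

lemma sub_dotProduct_inv_regularizedGram_mulVec_sum (hlam : lam ≠ 0) (p w : m → ℝ) (e : ι → ℝ) :
    w ⬝ᵥ p - p ⬝ᵥ (regularizedGram lam Φ)⁻¹ *ᵥ ∑ i, (w ⬝ᵥ Φ i + e i) • Φ i =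
      lam ^ 2 * ((regularizedGram lam Φ)⁻¹ *ᵥ p ⬝ᵥ w) -
        ∑ i, (Φ i ⬝ᵥ (regularizedGram lam Φ)⁻¹ *ᵥ p) * e i := by
  have hwp := dotProduct_regularizedGram_mulVec lam Φ w ((regularizedGram lam Φ)⁻¹ *ᵥ p)
  rw [regularizedGram_mulVec_inv_mulVec Φ hlam] at hwp
  rw [hwp, dotProduct_inv_regularizedGram_mulVec Φ hlam p]
  simp only [dotProduct_sum, dotProduct_smul, smul_eq_mul, add_mul, sum_add_distrib,
    dotProduct_comm _ (Φ _), dotProduct_comm w, mul_comm (e _)]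
  ring

lemma sq_mul_abs_inv_regularizedGram_mulVec_dotProduct_le (hlam : lam ≠ 0) (p w : m → ℝ) :
    lam ^ 2 * |(regularizedGram lam Φ)⁻¹ *ᵥ p ⬝ᵥ w| ≤
      √(∑ j, w j ^ 2) * √(lam ^ 2 * (p ⬝ᵥ (regularizedGram lam Φ)⁻¹ *ᵥ p)) := by
  set a := (regularizedGram lam Φ)⁻¹ *ᵥ p
  have hcs : (a ⬝ᵥ w) ^ 2 ≤ (a ⬝ᵥ a) * ∑ j, w j ^ 2 := by
    simpa only [dotProduct, sq] using sum_mul_sq_le_sq_mul_sq univ a w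
  have hvar : lam ^ 2 * (a ⬝ᵥ a) ≤ p ⬝ᵥ (regularizedGram lam Φ)⁻¹ *ᵥ p := by
    rw [dotProduct_inv_regularizedGram_mulVec_self Φ hlam]
    exact le_add_of_nonneg_right (sum_nonneg fun i _ => sq_nonneg _)
  have h := abs_le_sqrt <| show (lam ^ 2 * (a ⬝ᵥ w)) ^ 2 ≤
      (∑ j, w j ^ 2) * (lam ^ 2 * (p ⬝ᵥ (regularizedGram lam Φ)⁻¹ *ᵥ p)) from
    calc (lam ^ 2 * (a ⬝ᵥ w)) ^ 2 = lam ^ 2 * (lam ^ 2 * (a ⬝ᵥ w) ^ 2) := by ring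
      _ ≤ lam ^ 2 * (lam ^ 2 * ((a ⬝ᵥ a) * ∑ j, w j ^ 2)) := by gcongr
      _ = (∑ j, w j ^ 2) * (lam ^ 2 * (lam ^ 2 * (a ⬝ᵥ a))) := by ring
      _ ≤ (∑ j, w j ^ 2) * (lam ^ 2 * (p ⬝ᵥ (regularizedGram lam Φ)⁻¹ *ᵥ p)) := by gcongr
  rwa [abs_mul, abs_sq, sqrt_mul (sum_nonneg fun j _ => sq_nonneg _)] at h

lemma sqrt_sum_sq_dotProduct_inv_regularizedGram_mulVec_le (hlam : 0 < lam) (p : m → ℝ) :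
    √(∑ i, (Φ i ⬝ᵥ (regularizedGram lam Φ)⁻¹ *ᵥ p) ^ 2) ≤
      √(lam ^ 2 * (p ⬝ᵥ (regularizedGram lam Φ)⁻¹ *ᵥ p)) / lam := by
  rw [sqrt_mul (sq_nonneg _), sqrt_sq hlam.le, mul_div_cancel_left₀ _ hlam.ne']
  refine sqrt_le_sqrt ?_
  rw [dotProduct_inv_regularizedGram_mulVec_self Φ hlam.ne']
  exact le_add_of_nonneg_left (mul_nonneg (sq_nonneg _) (dotProduct_self_star_nonneg _))

end RegularizedGram

theorem offline_confidence_interval_general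
    {Ω : Type*} [MeasurableSpace Ω] (μ : Measure Ω) [IsProbabilityMeasure μ]
    {X : Type*} {d n : ℕ} (φ : X → (Fin d → ℝ))
    (w : Fin d → ℝ) (B : ℝ) (hw : Real.sqrt (∑ j, (w j) ^ 2) ≤ B)
    (x : Fin n → X)
    (ε : Fin n → Ω → ℝ)
    (hindep : ProbabilityTheory.iIndepFun ε μ)
    (R : ℝ) (hR : 0 < R)
    (hint : ∀ i, ∀ η : ℝ, Integrable (fun ω => Real.exp (η * ε i ω)) μ)
    (hsub : ∀ i, ∀ η : ℝ, ∫ ω, Real.exp (η * ε i ω) ∂μ ≤ Real.exp (η ^ 2 * R ^ 2 / 2))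
    (lam : ℝ) (hlam : 0 < lam) (x0 : X) (δ : ℝ) (hδ : δ ∈ Set.Ioo (0 : ℝ) 1) :
    ENNReal.ofReal (1 - δ) ≤
      μ {ω |
        |w ⬝ᵥ φ x0 -
          φ x0 ⬝ᵥ ((lam ^ 2) • (1 : Matrix (Fin d) (Fin d) ℝ) +
              ∑ i, Matrix.vecMulVec (φ (x i)) (φ (x i)))⁻¹ *ᵥ
            (∑ i, (w ⬝ᵥ φ (x i) + ε i ω) • φ (x i))| ≤
        (B + (R / lam) * Real.sqrt (2 * Real.log (2 / δ))) *
          Real.sqrt (lam ^ 2 *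
            (φ x0 ⬝ᵥ ((lam ^ 2) • (1 : Matrix (Fin d) (Fin d) ℝ) +
                ∑ i, Matrix.vecMulVec (φ (x i)) (φ (x i)))⁻¹ *ᵥ φ x0))} := by
  set Φ : Fin n → Fin d → ℝ := fun i => φ (x i)
  change _ ≤ μ {ω | |w ⬝ᵥ φ x0 - φ x0 ⬝ᵥ (regularizedGram lam Φ)⁻¹ *ᵥ
    ∑ i, (w ⬝ᵥ Φ i + ε i ω) • Φ i| ≤ _ * √(lam ^ 2 * (φ x0 ⬝ᵥ (regularizedGram lam Φ)⁻¹ *ᵥ φ x0))}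
  set c : Fin n → ℝ := fun i => Φ i ⬝ᵥ (regularizedGram lam Φ)⁻¹ *ᵥ φ x0
  set σ := √(lam ^ 2 * (φ x0 ⬝ᵥ (regularizedGram lam Φ)⁻¹ *ᵥ φ x0))
  have hsubG (i : Fin n) : HasSubgaussianMGF (ε i) (‖R‖₊ ^ 2) μ :=
    ⟨hint i, fun t => (hsub i t).trans_eq (by simp [mul_comm])⟩
  refine (hindep.ofReal_one_sub_le_measure_abs_sum_mul_le hsubG c hδ.1).trans
    (measure_mono <| Set.ofPred_subset_ofPred.2 fun ω hnoise => ?_)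
  have hbias := sq_mul_abs_inv_regularizedGram_mulVec_dotProduct_le Φ hlam.ne' (φ x0) w
  have hweights := sqrt_sum_sq_dotProduct_inv_regularizedGram_mulVec_le Φ hlam (φ x0)
  rw [sub_dotProduct_inv_regularizedGram_mulVec_sum Φ hlam.ne']
  calc _ ≤ |lam ^ 2 * ((regularizedGram lam Φ)⁻¹ *ᵥ φ x0 ⬝ᵥ w)| + |∑ i, c i * ε i ω| :=
        abs_sub _ _
    _ ≤ B * σ + R * (σ / lam) * √(2 * log (2 / δ)) := by
        rw [abs_mul, abs_sq]
        refine add_le_add (hbias.trans (by gcongr)) (hnoise.trans ?_)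
        rw [abs_of_pos hR]
        gcongr
    _ = _ := by ring

theorem offline_confidence_interval
    {Ω : Type*} [MeasurableSpace Ω] (μ : Measure Ω) [IsProbabilityMeasure μ]
    {X : Type*} {d n : ℕ} (φ : X → (Fin d → ℝ))
    (w : Fin d → ℝ) (B : ℝ) (hw : Real.sqrt (∑ j, (w j) ^ 2) ≤ B)
    (x : Fin n → X)
    (ε : Fin n → Ω → ℝ) (hmeas : ∀ i, Measurable (ε i))
    (hindep : ProbabilityTheory.iIndepFun ε μ)
    (R : ℝ) (hR : 0 < R)
    (hint : ∀ i, ∀ η : ℝ, Integrable (fun ω => Real.exp (η * ε i ω)) μ)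
    (hsub : ∀ i, ∀ η : ℝ, ∫ ω, Real.exp (η * ε i ω) ∂μ ≤ Real.exp (η ^ 2 * R ^ 2 / 2))
    (lam : ℝ) (hlam : 0 < lam) (x0 : X) (δ : ℝ) (hδ : δ ∈ Set.Ioo (0 : ℝ) 1) :
    ENNReal.ofReal (1 - δ) ≤
      μ {ω |
        |w ⬝ᵥ φ x0 -
          φ x0 ⬝ᵥ ((lam ^ 2) • (1 : Matrix (Fin d) (Fin d) ℝ) +
              ∑ i, Matrix.vecMulVec (φ (x i)) (φ (x i)))⁻¹ *ᵥ
            (∑ i, (w ⬝ᵥ φ (x i) + ε i ω) • φ (x i))| ≤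
        (B + (R / lam) * Real.sqrt (2 * Real.log (2 / δ))) *
          Real.sqrt (lam ^ 2 *
            (φ x0 ⬝ᵥ ((lam ^ 2) • (1 : Matrix (Fin d) (Fin d) ℝ) +
                ∑ i, Matrix.vecMulVec (φ (x i)) (φ (x i)))⁻¹ *ᵥ φ x0))} :=
  offline_confidence_interval_general μ φ w B hw x ε hindep R hR hint hsub lam hlam x0 δ hδ
end

section
/- Bias bound for kernel ridge regression: with φ : X → ℝ^d, ‖w‖₂ ≤ B, V_n = λ²I + Σᵢφ(xᵢ)φ(xᵢ)ᵀ, the noiseless prediction error satisfies |wᵀφ(x) − φ(x)ᵀV_n⁻¹Σᵢφ(xᵢ)(wᵀφ(xᵢ))| = λ²|φ(x)ᵀV_n⁻¹w| ≤ B·λ·√(φ(x)ᵀV_n⁻¹φ(x)) = B·σ_n(x). -/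
/-!
The data term of the ridge estimator is `(V_n - λ²I) w`, so applying `V_n⁻¹` to it returns `w`
up to the bias `λ² V_n⁻¹ w`. That bias is bounded by Cauchy–Schwarz for the positive semidefinite
form `V_n⁻¹`, together with `λ² wᵀV_n⁻¹w ≤ ‖w‖²`, which follows from `V_n ⪰ λ²I`.
-/

open Matrix

namespace Matrix

variable {ι κ R : Type*} [Fintype ι] [Fintype κ]

section CommRing

variable [CommRing R]

theorem sum_vecMulVec_self_mulVec (v : κ → ι → R) (w : ι → R) :
    (∑ i, vecMulVec (v i) (v i)) *ᵥ w = ∑ i, (w ⬝ᵥ v i) • v i := by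
  simp only [sum_mulVec, vecMulVec_mulVec, op_smul_eq_smul, dotProduct_comm]

theorem dotProduct_inv_mulVec_sub_smul_one_mulVec [DecidableEq ι] {A : Matrix ι ι R}
    (hA : IsUnit A.det) (c : R) (u w : ι → R) :
    u ⬝ᵥ A⁻¹ *ᵥ ((A - c • 1) *ᵥ w) = u ⬝ᵥ w - c * (u ⬝ᵥ A⁻¹ *ᵥ w) := by
  rw [sub_mulVec, mulVec_sub, mulVec_mulVec, nonsing_inv_mul _ hA, one_mulVec, smul_mulVec,
    one_mulVec, mulVec_smul, dotProduct_sub, dotProduct_smul, smul_eq_mul]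

end CommRing

theorem posSemidef_sum_vecMulVec_self (v : κ → ι → ℝ) :
    (∑ i, vecMulVec (v i) (v i)).PosSemidef :=
  posSemidef_sum _ fun i _ => by simpa using posSemidef_vecMulVec_self_star (v i)

namespace PosSemidef

variable {A : Matrix ι ι ℝ}

theorem dotProduct_mulVec_self_nonneg (hA : A.PosSemidef) (u : ι → ℝ) : 0 ≤ u ⬝ᵥ A *ᵥ u := by
  simpa using hA.dotProduct_mulVec_nonneg u

theorem dotProduct_mulVec_mul_self_le (hA : A.PosSemidef) (u v : ι → ℝ) :
    (u ⬝ᵥ A *ᵥ v) * (u ⬝ᵥ A *ᵥ v) ≤ (u ⬝ᵥ A *ᵥ u) * (v ⬝ᵥ A *ᵥ v) := by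
  let := A.toSeminormedAddCommGroup hA
  let := A.toInnerProductSpace hA
  have hinner (x y : ι → ℝ) : (inner ℝ x y : ℝ) = x ⬝ᵥ A *ᵥ y := by
    change (A *ᵥ y) ⬝ᵥ star x = _
    rw [star_trivial, dotProduct_comm]
  simpa only [hinner] using real_inner_mul_inner_self_le u v

theorem abs_dotProduct_mulVec_le (hA : A.PosSemidef) (u v : ι → ℝ) :
    |u ⬝ᵥ A *ᵥ v| ≤ √(u ⬝ᵥ A *ᵥ u) * √(v ⬝ᵥ A *ᵥ v) := by
  rw [← Real.sqrt_mul (hA.dotProduct_mulVec_self_nonneg u)]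
  exact Real.abs_le_sqrt (by simpa only [sq] using hA.dotProduct_mulVec_mul_self_le u v)

end PosSemidef

theorem dotProduct_mul_self_le (u v : ι → ℝ) :
    (u ⬝ᵥ v) * (u ⬝ᵥ v) ≤ (u ⬝ᵥ u) * (v ⬝ᵥ v) := by
  classical
  simpa only [one_mulVec] using PosSemidef.one.dotProduct_mulVec_mul_self_le u v

theorem mul_dotProduct_self_le_dotProduct_smul_one_add_mulVec [DecidableEq ι]
    {S : Matrix ι ι ℝ} (hS : S.PosSemidef) (c : ℝ) (u : ι → ℝ) :
    c * (u ⬝ᵥ u) ≤ u ⬝ᵥ (c • 1 + S) *ᵥ u := by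
  rw [add_mulVec, smul_mulVec, one_mulVec, dotProduct_add, dotProduct_smul, smul_eq_mul]
  exact le_add_of_nonneg_right (hS.dotProduct_mulVec_self_nonneg u)

theorem mul_dotProduct_inv_mulVec_le [DecidableEq ι] {A : Matrix ι ι ℝ} (hA : IsUnit A.det)
    {c : ℝ} (hc : 0 ≤ c) (hAc : ∀ u, c * (u ⬝ᵥ u) ≤ u ⬝ᵥ A *ᵥ u) (w : ι → ℝ) :
    c * (w ⬝ᵥ A⁻¹ *ᵥ w) ≤ w ⬝ᵥ w := by
  set v := A⁻¹ *ᵥ w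
  have hAv : A *ᵥ v = w := by rw [mulVec_mulVec, mul_nonsing_inv _ hA, one_mulVec]
  have hlow : c * (v ⬝ᵥ v) ≤ w ⬝ᵥ v := by simpa only [hAv, dotProduct_comm v] using hAc v
  have hv : 0 ≤ v ⬝ᵥ v := by simpa using dotProduct_star_self_nonneg v
  have hw : 0 ≤ w ⬝ᵥ w := by simpa using dotProduct_star_self_nonneg w
  have hcs := dotProduct_mul_self_le w v
  rcases ((mul_nonneg hc hv).trans hlow).eq_or_lt with hwv | hwv
  · rw [← hwv, mul_zero]
    exact hw
  -- `c s² ≤ c ‖w‖² ‖v‖² ≤ ‖w‖² s` with `s = ⟪w, v⟫ > 0`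
  · nlinarith [mul_le_mul_of_nonneg_left hcs hc, mul_le_mul_of_nonneg_left hlow hw]

end Matrix

theorem krr_bias_bound
    {X : Type*} {d n : ℕ} (φ : X → (Fin d → ℝ))
    (w : Fin d → ℝ) (B : ℝ) (hw : Real.sqrt (∑ j, (w j) ^ 2) ≤ B)
    (lam : ℝ) (hlam : 0 < lam) (xs : Fin n → X) (x : X) :
    |w ⬝ᵥ φ x -
        φ x ⬝ᵥ ((lam ^ 2) • (1 : Matrix (Fin d) (Fin d) ℝ) +
            ∑ i, Matrix.vecMulVec (φ (xs i)) (φ (xs i)))⁻¹ *ᵥ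
          (∑ i, (w ⬝ᵥ φ (xs i)) • φ (xs i))| =
      lam ^ 2 * |φ x ⬝ᵥ ((lam ^ 2) • (1 : Matrix (Fin d) (Fin d) ℝ) +
            ∑ i, Matrix.vecMulVec (φ (xs i)) (φ (xs i)))⁻¹ *ᵥ w| ∧
    lam ^ 2 * |φ x ⬝ᵥ ((lam ^ 2) • (1 : Matrix (Fin d) (Fin d) ℝ) +
            ∑ i, Matrix.vecMulVec (φ (xs i)) (φ (xs i)))⁻¹ *ᵥ w| ≤
      B * lam * Real.sqrt (φ x ⬝ᵥ ((lam ^ 2) • (1 : Matrix (Fin d) (Fin d) ℝ) +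
            ∑ i, Matrix.vecMulVec (φ (xs i)) (φ (xs i)))⁻¹ *ᵥ φ x) := by
  have hS := posSemidef_sum_vecMulVec_self fun i => φ (xs i)
  set A := (lam ^ 2) • (1 : Matrix (Fin d) (Fin d) ℝ) + ∑ i, vecMulVec (φ (xs i)) (φ (xs i))
  have hA : A.PosDef := (PosDef.one.smul (by positivity)).add_posSemidef hS
  have hdet : IsUnit A.det := (isUnit_iff_isUnit_det A).mp hA.isUnit
  have hdata : ∑ i, (w ⬝ᵥ φ (xs i)) • φ (xs i) = (A - lam ^ 2 • 1) *ᵥ w := by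
    rw [add_sub_cancel_left, sum_vecMulVec_self_mulVec]
  refine ⟨?_, ?_⟩
  · rw [hdata, dotProduct_inv_mulVec_sub_smul_one_mulVec hdet, dotProduct_comm w, sub_sub_cancel,
      abs_mul, abs_of_nonneg (by positivity)]
  have hwA : lam * √(w ⬝ᵥ A⁻¹ *ᵥ w) ≤ B :=
    calc lam * √(w ⬝ᵥ A⁻¹ *ᵥ w) = √(lam ^ 2 * (w ⬝ᵥ A⁻¹ *ᵥ w)) := by
          rw [Real.sqrt_mul (sq_nonneg lam), Real.sqrt_sq hlam.le]
      _ ≤ √(w ⬝ᵥ w) := Real.sqrt_le_sqrt <| mul_dotProduct_inv_mulVec_le hdet (sq_nonneg lam)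
          (mul_dotProduct_self_le_dotProduct_smul_one_add_mulVec hS _) w
      _ = √(∑ j, w j ^ 2) := by simp only [dotProduct, sq]
      _ ≤ B := hw
  calc lam ^ 2 * |φ x ⬝ᵥ A⁻¹ *ᵥ w|
      ≤ lam ^ 2 * (√(φ x ⬝ᵥ A⁻¹ *ᵥ φ x) * √(w ⬝ᵥ A⁻¹ *ᵥ w)) := by
        gcongr
        exact hA.posSemidef.inv.abs_dotProduct_mulVec_le _ _
    _ = (lam * √(w ⬝ᵥ A⁻¹ *ᵥ w)) * (lam * √(φ x ⬝ᵥ A⁻¹ *ᵥ φ x)) := by ring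
    _ ≤ B * (lam * √(φ x ⬝ᵥ A⁻¹ *ᵥ φ x)) := by gcongr
    _ = B * lam * √(φ x ⬝ᵥ A⁻¹ *ᵥ φ x) := by ring
end
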